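/- Let (Ω, μ) be a probability space and E a real inner product space. Let f : E → ℝ be differentiable with L-Lipschitz gradient. Let x, x', v, u ∈ E, η ∈ (0,1], σ ≥ 0, ℓ ≥ 0. Let G, G' : Ω → E be Bochner integrable with ∫ G dμ = ∇f(x), ∫ G' dμ = ∇f(x'), ∫ ‖G' − ∇f(x')‖² dμ ≤ σ², and ‖G'(ω) − G(ω)‖ ≤ ℓ·‖x' − x‖ for μ-almost every ω. Define v'(ω) = (1−η)·v + η·G'(ω) + (1−η)·(G'(ω) − G(ω)) and u'(ω) = u + η·(v'(ω) − u). Then ∫ ‖u' − v'‖² dμ ≤ (1−η)·‖u − v‖² + 6η·‖v − ∇f(x)‖² + 2·(ℓ² + (2/η)·L²)·‖x' − x‖² + 2η²·σ². -/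

import Mathlib

/-!
Since `u' - v' = (1 - η) • (u - v')`, the left side is `(1 - η)² 𝔼‖u - v'‖²`, which splits into
the squared bias `‖u - 𝔼v'‖²` plus the variance of `v'`. The bias is at most
`‖u - v‖ + η ‖v - ∇f(x)‖ + L ‖x' - x‖` and is absorbed by the weighted Young inequality
`(1 - η)² (a + b)² ≤ (1 - η) a² + b² / η`. The variance is at most `2η²σ² + 2ℓ²‖x' - x‖²`, because
`v' - 𝔼v' = η • (G' - ∇f(x')) + (1 - η) • ((G' - G) - 𝔼(G' - G))` and centring does not increase
the second moment.
-/

open MeasureTheory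

theorem one_sub_sq_mul_add_sq_le {η : ℝ} (hη : 0 < η) (hη1 : η ≤ 1) (a b : ℝ) :
    (1 - η) ^ 2 * (a + b) ^ 2 ≤ (1 - η) * a ^ 2 + b ^ 2 / η := by
  have key : (1 - η) * a ^ 2 + b ^ 2 / η - (1 - η) ^ 2 * (a + b) ^ 2
      = ((1 - η) * (η * a - (1 - η) * b) ^ 2 + η * (2 - η) * b ^ 2) / η := by
    field_simp
    ring
  have : 0 ≤ 1 - η := by linarith
  have : 0 ≤ 2 - η := by linarith
  rw [← sub_nonneg, key]
  positivity

theorem one_sub_sq_mul_sq_le_of_le {η a b c d : ℝ} (hη : 0 < η) (hη1 : η ≤ 1) (hb : 0 ≤ b)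
    (hba : b ≤ a + (η * c + d)) :
    (1 - η) ^ 2 * b ^ 2 ≤ (1 - η) * a ^ 2 + 2 * η * c ^ 2 + 2 * (d ^ 2 / η) := by
  calc (1 - η) ^ 2 * b ^ 2 ≤ (1 - η) ^ 2 * (a + (η * c + d)) ^ 2 := by gcongr
    _ ≤ (1 - η) * a ^ 2 + (η * c + d) ^ 2 / η := one_sub_sq_mul_add_sq_le hη hη1 _ _
    _ ≤ _ := by
      rw [add_assoc, add_le_add_iff_left, div_le_iff₀ hη]
      field_simp
      nlinarith [sq_nonneg (η * c - d)]

section NormedSpace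

variable {Ω : Type*} [MeasurableSpace Ω] {μ : Measure Ω} {E : Type*} [NormedAddCommGroup E]

theorem integral_norm_sub_sq_eq_zero_of_not_memLp [IsFiniteMeasure μ] (a : E) {X : Ω → E}
    (hX : AEStronglyMeasurable X μ) (hX₂ : ¬ MemLp X 2 μ) :
    ∫ ω, ‖a - X ω‖ ^ 2 ∂μ = 0 := by
  refine integral_undef fun h => hX₂ ?_
  have ha : MemLp (fun ω => a - X ω) 2 μ :=
    (memLp_two_iff_integrable_sq_norm (aestronglyMeasurable_const.sub hX)).2 h
  simpa [Pi.sub_def] using (memLp_const a).sub ha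

variable [NormedSpace ℝ E]

theorem integral_norm_smul_add_smul_sq_le {X Y : Ω → E} (hX : MemLp X 2 μ) (hY : MemLp Y 2 μ)
    (a b : ℝ) :
    ∫ ω, ‖a • X ω + b • Y ω‖ ^ 2 ∂μ ≤
      2 * a ^ 2 * ∫ ω, ‖X ω‖ ^ 2 ∂μ + 2 * b ^ 2 * ∫ ω, ‖Y ω‖ ^ 2 ∂μ := by
  have hX₂ := hX.integrable_norm_pow two_ne_zero
  have hY₂ := hY.integrable_norm_pow two_ne_zero
  rw [← integral_const_mul, ← integral_const_mul,
    ← integral_add (hX₂.const_mul _) (hY₂.const_mul _)]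
  refine integral_mono (((hX.const_smul a).add (hY.const_smul b)).integrable_norm_pow two_ne_zero)
    ((hX₂.const_mul _).add (hY₂.const_mul _)) fun ω => ?_
  have htri := norm_add_le (a • X ω) (b • Y ω)
  rw [norm_smul, norm_smul, Real.norm_eq_abs, Real.norm_eq_abs] at htri
  have hsq : ‖a • X ω + b • Y ω‖ ^ 2 ≤ (|a| * ‖X ω‖ + |b| * ‖Y ω‖) ^ 2 :=
    pow_le_pow_left₀ (norm_nonneg _) htri 2
  nlinarith [sq_nonneg (|a| * ‖X ω‖ - |b| * ‖Y ω‖), sq_abs a, sq_abs b]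

theorem integral_norm_add_smul_sub_sub_sq (u : E) (η : ℝ) (X : Ω → E) :
    ∫ ω, ‖u + η • (X ω - u) - X ω‖ ^ 2 ∂μ = (1 - η) ^ 2 * ∫ ω, ‖u - X ω‖ ^ 2 ∂μ := by
  rw [← integral_const_mul]
  congr 1 with ω
  rw [show u + η • (X ω - u) - X ω = (1 - η) • (u - X ω) by module, norm_smul, mul_pow,
    Real.norm_eq_abs, sq_abs]

def stormUpdate (η : ℝ) (v : E) (G G' : Ω → E) (ω : Ω) : E :=
  (1 - η) • v + η • G' ω + (1 - η) • (G' ω - G ω)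

theorem memLp_of_memLp_stormUpdate [IsFiniteMeasure μ] {p : ENNReal} {η : ℝ} (hη : η ≠ 0)
    {v : E} {G G' : Ω → E} (hΔ : MemLp (fun ω => G' ω - G ω) p μ)
    (h : MemLp (stormUpdate η v G G') p μ) : MemLp G' p μ := by
  have hG' : G' = fun ω =>
      η⁻¹ • (stormUpdate η v G G' ω - (1 - η) • v - (1 - η) • (G' ω - G ω)) := by
    funext ω
    have : stormUpdate η v G G' ω - (1 - η) • v - (1 - η) • (G' ω - G ω) = η • G' ω := by
      unfold stormUpdate
      abel
    rw [this, smul_smul, inv_mul_cancel₀ hη, one_smul]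
  rw [hG']
  exact ((h.sub (memLp_const _)).sub (hΔ.const_smul _)).const_smul _

variable [CompleteSpace E] [IsProbabilityMeasure μ]

theorem integral_stormUpdate (η : ℝ) (v : E) {G G' : Ω → E}
    (hG : Integrable G μ) (hG' : Integrable G' μ) :
    ∫ ω, stormUpdate η v G G' ω ∂μ =
      (1 - η) • v + η • ∫ ω, G' ω ∂μ + (1 - η) • (∫ ω, G' ω ∂μ - ∫ ω, G ω ∂μ) := by
  have hG'η : Integrable (fun ω => η • G' ω) μ := hG'.smul η
  have hmom : Integrable (fun ω => (1 - η) • v + η • G' ω) μ := (integrable_const _).add hG'η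
  have hΔ : Integrable (fun ω => (1 - η) • (G' ω - G ω)) μ := (hG'.sub hG).smul _
  unfold stormUpdate
  rw [integral_add hmom hΔ, integral_add (integrable_const _) hG'η]
  simp only [integral_smul, integral_sub hG' hG, integral_const, probReal_univ, one_smul]

theorem norm_sub_integral_stormUpdate_le {η : ℝ} (hη : 0 ≤ η) (u v : E) {G G' : Ω → E}
    (hG : Integrable G μ) (hG' : Integrable G' μ) :
    ‖u - ∫ ω, stormUpdate η v G G' ω ∂μ‖ ≤
      ‖u - v‖ + (η * ‖v - ∫ ω, G ω ∂μ‖ + ‖∫ ω, G' ω ∂μ - ∫ ω, G ω ∂μ‖) := by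
  set g := ∫ ω, G ω ∂μ
  set g' := ∫ ω, G' ω ∂μ
  rw [integral_stormUpdate η v hG hG', norm_sub_rev g' g]
  calc _ = ‖(u - v) + (η • (v - g) + (g - g'))‖ := by congr 1; module
    _ ≤ ‖u - v‖ + (‖η • (v - g)‖ + ‖g - g'‖) :=
      (norm_add_le _ _).trans (by gcongr; exact norm_add_le _ _)
    _ = _ := by rw [norm_smul, Real.norm_eq_abs, abs_of_nonneg hη]

end NormedSpace

section InnerProductSpace

variable {Ω : Type*} [MeasurableSpace Ω] {μ : Measure Ω} [IsProbabilityMeasure μ]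
  {E : Type*} [NormedAddCommGroup E] [InnerProductSpace ℝ E] [CompleteSpace E]

theorem integral_norm_sub_sq_eq {X : Ω → E} (hX : MemLp X 2 μ) (a : E) :
    ∫ ω, ‖a - X ω‖ ^ 2 ∂μ =
      ‖a - ∫ ω, X ω ∂μ‖ ^ 2 + ∫ ω, ‖X ω - ∫ ω, X ω ∂μ‖ ^ 2 ∂μ := by
  set m := ∫ ω, X ω ∂μ
  have hXm : MemLp (fun ω => X ω - m) 2 μ := hX.sub (memLp_const m)
  have hXm₁ : Integrable (fun ω => X ω - m) μ := hXm.integrable one_le_two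
  have hmean : ∫ ω, (X ω - m) ∂μ = 0 := by
    rw [integral_sub (hX.integrable one_le_two) (integrable_const m)]
    simp [m]
  have hinner : Integrable (fun ω => 2 * inner ℝ (a - m) (X ω - m)) μ :=
    (hXm₁.const_inner _).const_mul 2
  have hconst : Integrable (fun ω => ‖a - m‖ ^ 2 - 2 * inner ℝ (a - m) (X ω - m)) μ :=
    (integrable_const _).sub hinner
  calc ∫ ω, ‖a - X ω‖ ^ 2 ∂μ
      = ∫ ω, (‖a - m‖ ^ 2 - 2 * inner ℝ (a - m) (X ω - m) + ‖X ω - m‖ ^ 2) ∂μ := by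
        congr 1 with ω
        rw [← norm_sub_sq_real]
        congr 2
        abel
    _ = ‖a - m‖ ^ 2 + ∫ ω, ‖X ω - m‖ ^ 2 ∂μ := by
        rw [integral_add hconst (hXm.integrable_norm_pow two_ne_zero),
          integral_sub (integrable_const _) hinner, integral_const_mul, integral_inner hXm₁,
          hmean]
        simp

theorem integral_norm_sub_integral_sq_le {X : Ω → E} (hX : MemLp X 2 μ) :
    ∫ ω, ‖X ω - ∫ ω, X ω ∂μ‖ ^ 2 ∂μ ≤ ∫ ω, ‖X ω‖ ^ 2 ∂μ := by
  have h := integral_norm_sub_sq_eq hX 0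
  simp only [zero_sub, norm_neg] at h
  rw [h]
  exact le_add_of_nonneg_left (sq_nonneg _)

theorem integral_norm_stormUpdate_sub_integral_sq_le (η : ℝ) (v : E) {G G' : Ω → E} {σ C : ℝ}
    (hG : Integrable G μ) (hG' : MemLp G' 2 μ) (hσ : ∫ ω, ‖G' ω - ∫ ω, G' ω ∂μ‖ ^ 2 ∂μ ≤ σ ^ 2)
    (hC : ∀ᵐ ω ∂μ, ‖G' ω - G ω‖ ≤ C) :
    ∫ ω, ‖stormUpdate η v G G' ω - ∫ ω, stormUpdate η v G G' ω ∂μ‖ ^ 2 ∂μ ≤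
      2 * η ^ 2 * σ ^ 2 + 2 * (1 - η) ^ 2 * C ^ 2 := by
  set m' := ∫ ω, G' ω ∂μ
  set mΔ := ∫ ω, (G' ω - G ω) ∂μ
  have hG'₁ : Integrable G' μ := hG'.integrable one_le_two
  have hΔ : MemLp (fun ω => G' ω - G ω) 2 μ :=
    .of_bound (hG'₁.sub hG).aestronglyMeasurable C hC
  have hΔC : ∫ ω, ‖G' ω - G ω‖ ^ 2 ∂μ ≤ C ^ 2 := by
    refine (integral_mono_of_nonneg (.of_forall fun ω => by positivity)
      (integrable_const (C ^ 2)) ?_).trans (by simp)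
    filter_upwards [hC] with ω hω
    exact pow_le_pow_left₀ (norm_nonneg _) hω 2
  have hcentered : ∀ ω, stormUpdate η v G G' ω - ∫ ω, stormUpdate η v G G' ω ∂μ =
      η • (G' ω - m') + (1 - η) • ((G' ω - G ω) - mΔ) := by
    intro ω
    rw [integral_stormUpdate η v hG hG'₁, show mΔ = m' - ∫ ω, G ω ∂μ from integral_sub hG'₁ hG]
    unfold stormUpdate
    module
  simp_rw [hcentered]
  calc _ ≤ 2 * η ^ 2 * ∫ ω, ‖G' ω - m'‖ ^ 2 ∂μ
        + 2 * (1 - η) ^ 2 * ∫ ω, ‖(G' ω - G ω) - mΔ‖ ^ 2 ∂μ :=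
        integral_norm_smul_add_smul_sq_le (hG'.sub (memLp_const _)) (hΔ.sub (memLp_const _)) _ _
    _ ≤ _ := by
        gcongr
        exact (integral_norm_sub_integral_sq_le hΔ).trans hΔC

end InnerProductSpace

theorem stmt_11_general {Ω : Type*} [MeasurableSpace Ω] (μ : Measure Ω)
    [IsProbabilityMeasure μ]
    {E : Type*} [NormedAddCommGroup E] [InnerProductSpace ℝ E] [CompleteSpace E]
    (f : E → ℝ) (L : ℝ)
    (hlip : ∀ x y, ‖gradient f x - gradient f y‖ ≤ L * ‖x - y‖)
    (x x' v u : E) (η σ ℓ : ℝ)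
    (hη : 0 < η) (hη1 : η ≤ 1)
    (G G' : Ω → E) (hGint : Integrable G μ) (hG'int : Integrable G' μ)
    (hGmean : ∫ ω, G ω ∂μ = gradient f x)
    (hG'mean : ∫ ω, G' ω ∂μ = gradient f x')
    (hG'var : ∫ ω, ‖G' ω - gradient f x'‖ ^ 2 ∂μ ≤ σ ^ 2)
    (hlipae : ∀ᵐ ω ∂μ, ‖G' ω - G ω‖ ≤ ℓ * ‖x' - x‖)
    (v' : Ω → E)
    (hv' : ∀ ω, v' ω = (1 - η) • v + η • G' ω + (1 - η) • (G' ω - G ω))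
    (u' : Ω → E) (hu' : ∀ ω, u' ω = u + η • (v' ω - u)) :
    ∫ ω, ‖u' ω - v' ω‖ ^ 2 ∂μ ≤
      (1 - η) * ‖u - v‖ ^ 2 + 6 * η * ‖v - gradient f x‖ ^ 2
        + 2 * (ℓ ^ 2 + (2 / η) * L ^ 2) * ‖x' - x‖ ^ 2
        + 2 * η ^ 2 * σ ^ 2 := by
  set D := ‖x' - x‖
  have hv'eq : v' = stormUpdate η v G G' := funext hv'
  have h1η : 0 ≤ 1 - η := by linarith
  have h1η₂ : (1 - η) ^ 2 ≤ 1 := by nlinarith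
  simp_rw [hu', integral_norm_add_smul_sub_sub_sq]
  by_cases hv'₂ : MemLp v' 2 μ
  swap
  · have hv'meas : AEStronglyMeasurable v' μ := by
      rw [hv'eq]
      unfold stormUpdate
      fun_prop
    -- `∫ ‖u - v'‖²` is then the junk value `0`.
    rw [integral_norm_sub_sq_eq_zero_of_not_memLp u hv'meas hv'₂, mul_zero]
    have : 0 ≤ (1 - η) * ‖u - v‖ ^ 2 := mul_nonneg h1η (sq_nonneg _)
    positivity
  have hG'₂ : MemLp G' 2 μ := memLp_of_memLp_stormUpdate hη.ne'
    (.of_bound (hG'int.sub hGint).aestronglyMeasurable _ hlipae) (hv'eq ▸ hv'₂)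
  have hbias : ‖u - ∫ ω, v' ω ∂μ‖ ≤ ‖u - v‖ + (η * ‖v - gradient f x‖ + L * D) := by
    refine hv'eq ▸ (norm_sub_integral_stormUpdate_le hη.le u v hGint hG'int).trans ?_
    rw [hGmean, hG'mean]
    gcongr
    exact hlip x' x
  have hvar : ∫ ω, ‖v' ω - ∫ ω, v' ω ∂μ‖ ^ 2 ∂μ ≤ 2 * η ^ 2 * σ ^ 2 + 2 * (ℓ * D) ^ 2 := by
    refine hv'eq ▸ (integral_norm_stormUpdate_sub_integral_sq_le η v hGint hG'₂
      (hG'mean ▸ hG'var) hlipae).trans ?_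
    gcongr
    nlinarith [sq_nonneg (ℓ * D)]
  have hbias₂ := one_sub_sq_mul_sq_le_of_le hη hη1 (norm_nonneg _) hbias
  have hvar₂ : (1 - η) ^ 2 * ∫ ω, ‖v' ω - ∫ ω, v' ω ∂μ‖ ^ 2 ∂μ ≤
      ∫ ω, ‖v' ω - ∫ ω, v' ω ∂μ‖ ^ 2 ∂μ :=
    mul_le_of_le_one_left (integral_nonneg fun ω => by positivity) h1η₂
  rw [integral_norm_sub_sq_eq hv'₂, mul_add]
  have : 0 ≤ η * ‖v - gradient f x‖ ^ 2 := by positivity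
  have : 0 ≤ (L * D) ^ 2 / η := by positivity
  have : 2 * (ℓ ^ 2 + (2 / η) * L ^ 2) * D ^ 2 = 2 * (ℓ * D) ^ 2 + 4 * ((L * D) ^ 2 / η) := by ring
  linarith

/-- One-step second-momentum deviation bound of the Byz-VR-DM21 estimator:
with the STORM-type update `v' = (1-η)•v + η•G' + (1-η)•(G' - G)` and the
second momentum `u' = u + η•(v' - u)`. -/
theorem stmt_11 {Ω : Type*} [MeasurableSpace Ω] (μ : Measure Ω)
    [IsProbabilityMeasure μ]
    {E : Type*} [NormedAddCommGroup E] [InnerProductSpace ℝ E] [CompleteSpace E]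
    (f : E → ℝ) (L : ℝ) (hL : 0 ≤ L)
    (hdiff : Differentiable ℝ f)
    (hlip : ∀ x y, ‖gradient f x - gradient f y‖ ≤ L * ‖x - y‖)
    (x x' v u : E) (η σ ℓ : ℝ)
    (hη : 0 < η) (hη1 : η ≤ 1) (hσ : 0 ≤ σ) (hℓ : 0 ≤ ℓ)
    (G G' : Ω → E) (hGint : Integrable G μ) (hG'int : Integrable G' μ)
    (hGmean : ∫ ω, G ω ∂μ = gradient f x)
    (hG'mean : ∫ ω, G' ω ∂μ = gradient f x')
    (hG'var : ∫ ω, ‖G' ω - gradient f x'‖ ^ 2 ∂μ ≤ σ ^ 2)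
    (hlipae : ∀ᵐ ω ∂μ, ‖G' ω - G ω‖ ≤ ℓ * ‖x' - x‖)
    (v' : Ω → E)
    (hv' : ∀ ω, v' ω = (1 - η) • v + η • G' ω + (1 - η) • (G' ω - G ω))
    (u' : Ω → E) (hu' : ∀ ω, u' ω = u + η • (v' ω - u)) :
    ∫ ω, ‖u' ω - v' ω‖ ^ 2 ∂μ ≤
      (1 - η) * ‖u - v‖ ^ 2 + 6 * η * ‖v - gradient f x‖ ^ 2
        + 2 * (ℓ ^ 2 + (2 / η) * L ^ 2) * ‖x' - x‖ ^ 2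
        + 2 * η ^ 2 * σ ^ 2 :=
  stmt_11_general μ f L hlip x x' v u η σ ℓ hη hη1 G G' hGint hG'int hGmean hG'mean hG'var hlipae v'
    hv' u' hu'
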